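/- arXiv:1701.00637 — 2 statements merged into one kernel-verified Lean document; each statement's English description precedes it below -/
import Mathlib

section
/- If M β-reduces to N in n steps with n ≥ 1, then |N| < 8·(|M|/8)^(2^n). -/
inductive Lam : Type
  | var : ℕ → Lam
  | lam : Lam → Lam
  | app : Lam → Lam → Lam
  deriving DecidableEq

namespace Lam

/-- term size -/
def size : Lam → ℕ
  | var _ => 1
  | lam M => 1 + M.size
  | app M N => 1 + M.size + N.size

/-- lift (shift) free variables ≥ d by 1 -/
def lift (d : ℕ) : Lam → Lam
  | var n => if n < d then var n else var (n+1)
  | lam M => lam (M.lift (d+1))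
  | app M N => app (M.lift d) (N.lift d)

/-- capture-avoiding substitution of N for the free variable x (de Bruijn) -/
def subst : Lam → ℕ → Lam → Lam
  | var n, x, N => if n = x then N else if x < n then var (n-1) else var n
  | lam M, x, N => lam (M.subst (x+1) (N.lift 0))
  | app M P, x, N => app (M.subst x N) (P.subst x N)

/-- number of free occurrences of the variable x -/
def count : Lam → ℕ → ℕ
  | var n, x => if n = x then 1 else 0
  | lam M, x => M.count (x+1)
  | app M N, x => M.count x + N.count x

/-- one-step β-reduction -/
inductive Step : Lam → Lam → Prop
  | beta (M N : Lam) : Step (app (lam M) N) (M.subst 0 N)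
  | appL {M M' : Lam} (N : Lam) : Step M M' → Step (app M N) (app M' N)
  | appR (M : Lam) {N N' : Lam} : Step N N' → Step (app M N) (app M N')
  | abs {M M' : Lam} : Step M M' → Step (lam M) (lam M')

/-- many-step β-reduction (reflexive-transitive closure) -/
def Red : Lam → Lam → Prop := Relation.ReflTransGen Step

/-- n-step β-reduction -/
def Steps : ℕ → Lam → Lam → Prop
  | 0, M, N => M = N
  | n+1, M, N => ∃ P, Step M P ∧ Steps n P N

/-- Takahashi translation (Gross-Knuth complete development) -/
def star : Lam → Lam
  | var n => var n
  | lam M => lam (star M)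
  | app (lam M) N => (star M).subst 0 (star N)
  | app (var n) N => app (var n) (star N)
  | app (app M₁ M₂) N => app (star (app M₁ M₂)) (star N)

/-- iterated Takahashi translation M^(n*) -/
def iterStar (n : ℕ) (M : Lam) : Lam := star^[n] M

end Lam

/-!
A single β-step `M → N` satisfies `8 |N| < |M|²`, i.e. it at most squares `|·| / 8`. For a
contraction `(λM) N' → M[N'/0]`, the bound variable occurs at most `(|M| + 1) / 2` times and each
occurrence grows by `|N'| - 1`, which is well below `|(λM) N'|² / 8`; a congruence step keeps the
bound because a reducible term has size at least 4. Iterating over `n ≥ 1` steps squares `n` times.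
-/

namespace Lam

lemma one_le_size (M : Lam) : 1 ≤ M.size := by
  induction M <;> simp only [size] <;> omega

lemma size_lift (d : ℕ) (M : Lam) : (M.lift d).size = M.size := by
  induction M generalizing d with
  | var n => simp only [lift]; split <;> rfl
  | lam M ih => simp [lift, size, ih]
  | app M N ihM ihN => simp [lift, size, ihM, ihN]

lemma two_mul_count_le (M : Lam) (x : ℕ) : 2 * M.count x ≤ M.size + 1 := by
  induction M generalizing x with
  | var n => simp only [count, size]; split <;> omega
  | lam M ih => simp only [count, size]; have := ih (x + 1); omega
  | app M N ihM ihN =>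
    simp only [count, size]
    have := ihM x; have := ihN x; have := M.one_le_size; have := N.one_le_size
    omega

lemma size_subst_add_count_le (M : Lam) (x : ℕ) (N : Lam) :
    (M.subst x N).size + M.count x ≤ M.size + M.count x * N.size := by
  induction M generalizing x N with
  | var n =>
    by_cases h : n = x
    · simp [subst, count, size, h]
    · simp only [subst, count, size, h, if_false]; split <;> simp [size]
  | lam M ih =>
    have := ih (x + 1) (N.lift 0)
    rw [size_lift] at this
    simp only [subst, count, size]
    omega
  | app M P ihM ihP =>
    have := ihM x N; have := ihP x N
    simp only [subst, count, size, add_mul]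
    omega

lemma Step.four_le_size {M N : Lam} (h : Step M N) : 4 ≤ M.size := by
  induction h with
  | beta M N => have := M.one_le_size; have := N.one_le_size; simp only [size]; omega
  | appL N _ ih => simp only [size]; omega
  | appR M _ ih => simp only [size]; omega
  | abs _ ih => simp only [size]; omega

lemma Step.eight_mul_size_lt_sq {M N : Lam} (h : Step M N) : 8 * N.size < M.size ^ 2 := by
  induction h with
  | beta M N =>
    have hsubst := size_subst_add_count_le M 0 N
    have hcount : 2 * M.count 0 * N.size ≤ (M.size + 1) * N.size :=
      Nat.mul_le_mul_right _ (two_mul_count_le M 0)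
    have := M.one_le_size; have := N.one_le_size
    simp only [size]
    nlinarith [sq_nonneg ((M.size : ℤ) - N.size)]
  | appL N hstep ih =>
    have := hstep.four_le_size; have := N.one_le_size
    simp only [size] at *
    nlinarith
  | appR M hstep ih =>
    have := hstep.four_le_size; have := M.one_le_size
    simp only [size] at *
    nlinarith
  | abs hstep ih =>
    have := hstep.four_le_size
    simp only [size] at *
    nlinarith

lemma Step.size_div_eight_lt_sq {M N : Lam} (h : Step M N) :
    (N.size : ℚ) / 8 < ((M.size : ℚ) / 8) ^ 2 := by
  have : (8 * N.size : ℚ) < (M.size : ℚ) ^ 2 := by exact_mod_cast h.eight_mul_size_lt_sq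
  rw [div_pow]
  linarith

lemma Steps.size_div_eight_lt_pow {n : ℕ} {M N : Lam} (h : Steps (n + 1) M N) :
    (N.size : ℚ) / 8 < ((M.size : ℚ) / 8) ^ 2 ^ (n + 1) := by
  induction n generalizing M with
  | zero =>
    obtain ⟨P, hMP, rfl⟩ := h
    simpa using hMP.size_div_eight_lt_sq
  | succ n ih =>
    obtain ⟨P, hMP, hPN⟩ := h
    calc (N.size : ℚ) / 8 < ((P.size : ℚ) / 8) ^ 2 ^ (n + 1) := ih hPN
      _ ≤ (((M.size : ℚ) / 8) ^ 2) ^ 2 ^ (n + 1) :=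
        pow_le_pow_left₀ (by positivity) hMP.size_div_eight_lt_sq.le _
      _ = ((M.size : ℚ) / 8) ^ 2 ^ (n + 2) := by rw [← pow_mul, pow_succ' 2 (n + 1)]

end Lam

/-- size after an n-step reduction, n ≥ 1 -/
theorem size_steps {n : ℕ} {M N : Lam} (hn : 1 ≤ n) (h : Lam.Steps n M N) :
    (N.size : ℚ) < 8 * ((M.size : ℚ) / 8) ^ (2 ^ n) := by
  obtain ⟨m, rfl⟩ := Nat.exists_eq_add_of_le' hn
  linarith [h.size_div_eight_lt_pow]
end

section
/- (Weak cofinal property) If M β-reduces to N in one step, then N β-reduces to M*, and moreover the reduction N →^l M* can be done with l ≤ (1/2)|N| − 1 when |N| ≥ 4. -/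
namespace Lam

theorem lift_lift (M : Lam) {d e : ℕ} (h : d ≤ e) :
    (M.lift e).lift d = (M.lift d).lift (e + 1) := by
  induction M generalizing d e with
  | var n => grind [lift]
  | lam M ih => simp only [lift, ih (Nat.succ_le_succ h)]
  | app A B ihA ihB => simp only [lift, ihA h, ihB h]

theorem lift_subst_of_le (M N : Lam) {x d : ℕ} (h : x ≤ d) :
    (M.subst x N).lift d = (M.lift (d + 1)).subst x (N.lift d) := by
  induction M generalizing N x d with
  | var n => grind [lift, subst]
  | lam M ih =>
    simp only [lift, subst, ih (N.lift 0) (Nat.succ_le_succ h), lift_lift N (Nat.zero_le d)]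
  | app A B ihA ihB => simp only [lift, subst, ihA N h, ihB N h]

theorem lift_subst_of_ge (M N : Lam) {x d : ℕ} (h : d ≤ x) :
    (M.subst x N).lift d = (M.lift d).subst (x + 1) (N.lift d) := by
  induction M generalizing N x d with
  | var n => grind [lift, subst]
  | lam M ih =>
    simp only [lift, subst, ih (N.lift 0) (Nat.succ_le_succ h), lift_lift N (Nat.zero_le d)]
  | app A B ihA ihB => simp only [lift, subst, ihA N h, ihB N h]

theorem subst_lift (M N : Lam) (d : ℕ) : (M.lift d).subst d N = M := by
  induction M generalizing N d with
  | var n => grind [lift, subst]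
  | lam M ih => simp only [lift, subst, ih]
  | app A B ihA ihB => simp only [lift, subst, ihA, ihB]

theorem subst_subst (M N P : Lam) {i j : ℕ} (h : i ≤ j) :
    (M.subst i N).subst j P = (M.subst (j + 1) (P.lift i)).subst i (N.subst j P) := by
  induction M generalizing N P i j with
  | var n => grind [subst, subst_lift]
  | lam M ih =>
    simp only [subst, ih (N.lift 0) (P.lift 0) (Nat.succ_le_succ h), lift_lift P (Nat.zero_le i),
      lift_subst_of_ge N P (Nat.zero_le j)]
  | app A B ihA ihB => simp only [subst, ihA N P h, ihB N P h]

/-- Parallel reduction `Par b M N`, where `b` counts the redexes contracted. -/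
inductive Par : ℕ → Lam → Lam → Prop
  | var (n : ℕ) : Par 0 (var n) (var n)
  | lam {b M M'} : Par b M M' → Par b (lam M) (lam M')
  | app {b c M M' N N'} : Par b M M' → Par c N N' → Par (b + c) (app M N) (app M' N')
  | beta {b c M M' N N'} : Par b M M' → Par c N N' →
      Par (b + c + 1) (app (lam M) N) (M'.subst 0 N')

theorem Par.refl (M : Lam) : Par 0 M M := by
  induction M with
  | var n => exact .var n
  | lam M ih => exact .lam ih
  | app A B ihA ihB => exact .app ihA ihB

theorem Par.lift {b M M'} (h : Par b M M') (d : ℕ) : Par b (M.lift d) (M'.lift d) := by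
  induction h generalizing d with
  | var n => simp only [Lam.lift]; split_ifs <;> exact .refl _
  | lam _ ih => exact .lam (ih (d + 1))
  | app _ _ ihA ihB => exact .app (ihA d) (ihB d)
  | beta _ _ ihA ihB =>
    rw [lift_subst_of_le _ _ (Nat.zero_le d)]
    exact .beta (ihA (d + 1)) (ihB d)

-- The number of redexes is not tracked: substitution may duplicate those of `N`.
theorem Par.subst {b c M M' N N'} (hM : Par b M M') (hN : Par c N N') (x : ℕ) :
    ∃ k, Par k (M.subst x N) (M'.subst x N') := by
  induction hM generalizing c N N' x with
  | var n =>
    simp only [Lam.subst]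
    split_ifs
    exacts [⟨c, hN⟩, ⟨0, .refl _⟩, ⟨0, .refl _⟩]
  | lam _ ih =>
    obtain ⟨k, hk⟩ := ih (hN.lift 0) (x + 1)
    exact ⟨k, .lam hk⟩
  | app _ _ ihA ihB =>
    obtain ⟨k₁, h₁⟩ := ihA hN x
    obtain ⟨k₂, h₂⟩ := ihB hN x
    exact ⟨k₁ + k₂, .app h₁ h₂⟩
  | @beta _ _ _ A' _ B' _ _ ihA ihB =>
    obtain ⟨k₁, h₁⟩ := ihA (hN.lift 0) (x + 1)
    obtain ⟨k₂, h₂⟩ := ihB hN x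
    rw [subst_subst A' B' N' (Nat.zero_le x)]
    exact ⟨k₁ + k₂ + 1, .beta h₁ h₂⟩

theorem Par.exists_par_star {b M N} (h : Par b M N) : ∃ c, Par c N M.star := by
  induction h with
  | var n => exact ⟨0, .refl _⟩
  | lam _ ih =>
    obtain ⟨c, hc⟩ := ih
    exact ⟨c, .lam hc⟩
  | @app _ _ A _ _ _ hA _ ihA ihB =>
    obtain ⟨c₁, h₁⟩ := ihA
    obtain ⟨c₂, h₂⟩ := ihB
    cases A with
    | var n =>
      cases hA
      exact ⟨c₂, by simpa only [star, Nat.zero_add] using Par.app (.refl (.var n)) h₂⟩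
    | lam A =>
      cases hA
      cases h₁ with
      | lam h₁ => exact ⟨c₁ + c₂ + 1, .beta h₁ h₂⟩
    | app A₁ A₂ => exact ⟨c₁ + c₂, .app h₁ h₂⟩
  | beta _ _ ihA ihB =>
    obtain ⟨c₁, h₁⟩ := ihA
    obtain ⟨c₂, h₂⟩ := ihB
    exact h₁.subst h₂ 0

theorem Step.toPar {M N} (h : Step M N) : Par 1 M N := by
  induction h with
  | beta A B => simpa using Par.beta (.refl A) (.refl B)
  | appL N _ ih => exact .app ih (.refl N)
  | appR M _ ih => exact .app (.refl M) ih
  | abs _ ih => exact .lam ih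

theorem Par.two_mul_lt_size {b M N} (h : Par b M N) : 2 * b < M.size := by
  induction h <;> simp only [size] <;> omega

theorem Par.two_mul_add_two_le_size {b M N} (h : Par b M N) (hb : 0 < b) :
    2 * b + 2 ≤ M.size := by
  induction h with
  | var n => omega
  | lam _ ih => simp only [size]; omega
  | @app b c _ _ _ _ hA hB ihA ihB =>
    have := hA.two_mul_lt_size
    have := hB.two_mul_lt_size
    simp only [size]
    rcases Nat.eq_zero_or_pos b with rfl | hb
    · have := ihB (by omega)
      omega
    · have := ihA hb
      omega
  | beta hA hB =>
    have := hA.two_mul_lt_size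
    have := hB.two_mul_lt_size
    simp only [size]
    omega

theorem Steps.trans {a b M P N} (h₁ : Steps a M P) (h₂ : Steps b P N) : Steps (a + b) M N := by
  induction a generalizing M with
  | zero => cases h₁; simpa using h₂
  | succ a ih =>
    obtain ⟨Q, hMQ, hQP⟩ := h₁
    rw [Nat.add_right_comm]
    exact ⟨Q, hMQ, ih hQP⟩

theorem Steps.map (f : Lam → Lam) (hf : ∀ {M N}, Step M N → Step (f M) (f N)) {a M N}
    (h : Steps a M N) : Steps a (f M) (f N) := by
  induction a generalizing M with
  | zero => cases h; rfl
  | succ a ih =>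
    obtain ⟨Q, hMQ, hQN⟩ := h
    exact ⟨f Q, hf hMQ, ih hQN⟩

theorem Steps.red {a M N} (h : Steps a M N) : Red M N := by
  induction a generalizing M with
  | zero => cases h; exact .refl
  | succ a ih =>
    obtain ⟨Q, hMQ, hQN⟩ := h
    exact .head hMQ (ih hQN)

theorem Par.steps {b M N} (h : Par b M N) : Steps b M N := by
  induction h with
  | var n => rfl
  | lam _ ih => exact ih.map _ Step.abs
  | app _ _ ihA ihB => exact (ihA.map _ (Step.appL _)).trans (ihB.map _ (Step.appR _))
  | @beta b c A A' B B' _ _ ihA ihB =>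
    have hB : Steps c (.app (.lam A) B) (.app (.lam A) B') := ihB.map _ (Step.appR _)
    have hA : Steps b (.app (.lam A) B') (.app (.lam A') B') :=
      ihA.map (fun P => .app (.lam P) B') fun h => .appL _ (.abs h)
    rw [Nat.add_comm b c]
    exact (hB.trans hA).trans ⟨_, .beta A' B', rfl⟩

end Lam

/-- weak cofinal property: if M → N then N ↠ M*, within (1/2)|N| − 1 steps
when |N| ≥ 4 -/
theorem weak_cofinal {M N : Lam} (h : Lam.Step M N) :
    Lam.Red N M.star ∧
      ∃ l : ℕ, Lam.Steps l N M.star ∧ (4 ≤ N.size → (l : ℚ) ≤ (N.size : ℚ) / 2 - 1) := by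
  obtain ⟨c, hc⟩ := h.toPar.exists_par_star
  refine ⟨hc.steps.red, c, hc.steps, fun hN => ?_⟩
  rcases Nat.eq_zero_or_pos c with rfl | hc₀
  · have : (4 : ℚ) ≤ N.size := by exact_mod_cast hN
    push_cast
    linarith
  · have : (2 * c + 2 : ℚ) ≤ N.size := by exact_mod_cast hc.two_mul_add_two_le_size hc₀
    linarith
end
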